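/- Let N be odd and 0 ≤ n ≤ ⌊N/2⌋. For every k with |k| ≤ ⌊N/2⌋, the Gaussian-type vector satisfies u_n(k) = (α_n S(n)² / N²) · S(N-n-1-k) · S(N-n-1+k), where α_n = S(n)^{-2} S(2n)^{1/2} for n ≥ 1 and α_0 = 1. -/

import Mathlib

open Real Finset

/-- `S N k = ∏_{j=1}^{k} (2 sin(ω j / 2))` with `ω = 2π/N`, extended to integer arguments. -/
noncomputable def SZ (N : ℕ) (k : ℤ) : ℝ := ∏ j ∈ Finset.Icc 1 k.toNat, (2 * Real.sin (π * j / N))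

/-- `S N k` for natural `k`. -/
noncomputable def S (N k : ℕ) : ℝ := ∏ j ∈ Finset.Icc 1 k, (2 * Real.sin (π * j / N))

/-- `t_k = (2/√ω) sin(ω k / 2)` with `ω = 2π/N`. -/
noncomputable def t (N : ℕ) (k : ℤ) : ℝ := (2 / Real.sqrt (2 * π / N)) * Real.sin (π * k / N)

/-- The normalisation constant `α_n`. -/
noncomputable def alph (N n : ℕ) : ℝ :=
  if n = 0 then (if Even N then 1 / 2 else 1)
  else if Even N then Real.sqrt (S N (2 * n - 1) * Real.sin (π * n / N)) / S N n ^ 2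
  else Real.sqrt (S N (2 * n)) / S N n ^ 2

/-- The Gaussian-type vector `u_n(k) = α_n ∏_{j=n+1}^{⌊N/2⌋} (1 - (t_k/t_j)²)`. -/
noncomputable def u (N n : ℕ) (k : ℤ) : ℝ :=
  alph N n * ∏ j ∈ Finset.Icc (n + 1) (N / 2), (1 - (t N k / t N j) ^ 2)

/-!
Both sides are even in `k` (`t` is odd), so take `k = κ ≥ 0`. Since
`1 - sin² x / sin² y = sin (y - x) sin (y + x) / sin² y`, each factor of the product is
`s(j - κ) s(j + κ) / s(j)²` with `s(j) = 2 sin (π j / N)`, and the product over `n < j ≤ N/2`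
telescopes into quotients of the partial products `S`. The reflection `s(N - j) = s(j)` together
with `S(N - 1) = N` gives `S(a) S(b) = N` whenever `a + b = N - 1`, which turns the quotients into
the stated closed form. When `n < κ` both sides vanish: on the left the factor `j = κ`, on the
right `S(m)` with `m ≥ N`, which contains `sin π`.
-/

theorem Finset.prod_Icc_add' {α M : Type*} [CommMonoid M] [AddCommMonoid α] [PartialOrder α]
    [IsOrderedCancelAddMonoid α] [ExistsAddOfLE α] [LocallyFiniteOrder α]
    (f : α → M) (a b c : α) : ∏ x ∈ Icc a b, f (x + c) = ∏ x ∈ Icc (a + c) (b + c), f x := by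
  rw [← map_add_right_Icc, prod_map]
  rfl

theorem Finset.prod_Icc_sub' {M : Type*} [CommMonoid M] (f : ℕ → M) {a b c : ℕ} (hca : c ≤ a)
    (hcb : c ≤ b) : ∏ x ∈ Icc a b, f (x - c) = ∏ x ∈ Icc (a - c) (b - c), f x := by
  have := prod_Icc_add' (fun x ↦ f (x - c)) (a - c) (b - c) c
  simp only [Nat.add_sub_cancel, Nat.sub_add_cancel hca, Nat.sub_add_cancel hcb] at this
  exact this.symm

theorem Real.sin_sq_sub_sin_sq (x y : ℝ) : sin y ^ 2 - sin x ^ 2 = sin (y - x) * sin (y + x) := by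
  rw [sin_sub, sin_add]
  linear_combination sin x ^ 2 * sin_sq_add_cos_sq y - sin y ^ 2 * sin_sq_add_cos_sq x

lemma sin_pi_mul_div_pos {N j : ℕ} (hj : 0 < j) (hjN : j < N) : 0 < sin (π * j / N) := by
  have hj' : (0 : ℝ) < j := by exact_mod_cast hj
  have hjN' : (j : ℝ) < N := by exact_mod_cast hjN
  have hN' : (0 : ℝ) < N := hj'.trans hjN'
  apply sin_pos_of_pos_of_lt_pi (by positivity)
  rw [div_lt_iff₀ hN']
  exact mul_lt_mul_of_pos_left hjN' pi_pos

lemma S_pos {N m : ℕ} (hm : m < N) : 0 < S N m :=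
  prod_pos fun _ hj ↦ mul_pos two_pos <| sin_pi_mul_div_pos (mem_Icc.1 hj).1 <|
    (mem_Icc.1 hj).2.trans_lt hm

lemma S_eq_zero {N m : ℕ} (hN : 0 < N) (hm : N ≤ m) : S N m = 0 :=
  prod_eq_zero (i := N) (mem_Icc.2 ⟨hN, hm⟩) (by field_simp; simp)

lemma S_mul_prod_Icc (N : ℕ) {a b : ℕ} (hab : a ≤ b) :
    S N a * ∏ j ∈ Icc (a + 1) b, 2 * sin (π * j / N) = S N b := by
  have h (c : ℕ) : Icc 1 c = Ioc 0 c := Icc_add_one_left_eq_Ioc 0 c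
  simp only [S, h, Icc_add_one_left_eq_Ioc]
  exact prod_Ioc_consecutive _ a.zero_le hab

lemma prod_Icc_two_sin_eq_div {N a b : ℕ} (hab : a ≤ b) (ha : a < N) :
    ∏ j ∈ Icc (a + 1) b, 2 * sin (π * j / N) = S N b / S N a := by
  rw [eq_div_iff (S_pos ha).ne', mul_comm, S_mul_prod_Icc N hab]

open Complex in
/- `∏_{k=1}^{N-1} (1 - ζ^k) = N` for a primitive `N`-th root of unity `ζ`, and
`‖1 - e^{iθ}‖ = 2 sin (θ/2)`. -/
lemma S_self_sub_one {N : ℕ} (hN : 0 < N) : S N (N - 1) = N := by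
  obtain ⟨m, rfl⟩ : ∃ m, N = m + 1 := ⟨N - 1, by omega⟩
  have h := congrArg (‖·‖) (isPrimitiveRoot_exp (m + 1) m.succ_ne_zero).prod_one_sub_pow_eq_order
  simp only [norm_prod] at h
  rw [Nat.add_sub_cancel, S, ← Ico_add_one_right_eq_Icc, prod_Ico_eq_prod_range, Nat.add_sub_cancel]
  convert h using 1
  · refine prod_congr rfl fun j hj ↦ ?_
    have hx : (↑(j + 1) * (2 * π * I / ↑(m + 1)) : ℂ) = I * ↑(2 * π * (1 + j) / (m + 1) : ℝ) := by
      push_cast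
      ring
    have hx' : 2 * π * (1 + j) / (m + 1) / 2 = π * ↑(1 + j) / ↑(m + 1) := by
      push_cast
      ring
    have hs := sin_pi_mul_div_pos (N := m + 1) (j := 1 + j) (by omega) (by simp at hj; omega)
    rw [← Complex.exp_nat_mul, hx, norm_sub_rev, norm_exp_I_mul_ofReal_sub_one, hx',
      Real.norm_of_nonneg (mul_pos two_pos hs).le]
  · push_cast
    exact_mod_cast (Complex.norm_natCast (m + 1)).symm

lemma S_mul_S_of_add_eq {N a b : ℕ} (h : a + b + 1 = N) : S N a * S N b = N := by
  rw [← S_self_sub_one (N := N) (by omega), ← S_mul_prod_Icc N (show a ≤ N - 1 by omega)]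
  congr 1
  refine prod_nbij' (fun j ↦ N - j) (fun j ↦ N - j) ?_ ?_ ?_ ?_ fun j hj ↦ ?_
  iterate 4 intro j hj; simp only [mem_Icc] at hj ⊢; omega
  have hN : (N : ℝ) ≠ 0 := by norm_cast; omega
  rw [Nat.cast_sub (by simp at hj; omega), mul_sub, sub_div, mul_div_cancel_right₀ _ hN, sin_pi_sub]

lemma prod_Icc_two_sin_add_eq_div {N a b c : ℕ} (hab : a ≤ b) (hac : a + c < N) :
    ∏ j ∈ Icc (a + 1) b, 2 * sin (π * ↑(j + c) / N) = S N (b + c) / S N (a + c) := by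
  rw [prod_Icc_add' (fun i : ℕ ↦ 2 * sin (π * i / N)), add_right_comm,
    prod_Icc_two_sin_eq_div (by omega) hac]

lemma prod_Icc_two_sin_sub_eq_div {N a b c : ℕ} (hca : c ≤ a) (hab : a ≤ b) (ha : a < N) :
    ∏ j ∈ Icc (a + 1) b, 2 * sin (π * ↑(j - c) / N) = S N (b - c) / S N (a - c) := by
  rw [prod_Icc_sub' (fun i : ℕ ↦ 2 * sin (π * i / N)) (by omega) (by omega),
    Nat.sub_add_comm hca, prod_Icc_two_sin_eq_div (by omega) (by omega)]

lemma t_div_t {N : ℕ} (hN : 0 < N) (k j : ℤ) :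
    t N k / t N j = sin (π * k / N) / sin (π * j / N) := by
  have : (0 : ℝ) < N := by exact_mod_cast hN
  exact mul_div_mul_left _ _ (by positivity)

lemma t_neg (N : ℕ) (k : ℤ) : t N (-k) = -t N k := by
  simp only [t, Int.cast_neg, mul_neg, neg_div, sin_neg]

lemma one_sub_t_div_t_sq {N j κ : ℕ} (hj : 0 < j) (hjN : j < N) (hκj : κ ≤ j) :
    1 - (t N κ / t N j) ^ 2 =
      2 * sin (π * ↑(j - κ) / N) * (2 * sin (π * ↑(j + κ) / N)) / (2 * sin (π * j / N)) ^ 2 := by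
  have hs := sin_pi_mul_div_pos hj hjN
  rw [t_div_t (by omega), Nat.cast_sub hκj]
  push_cast
  rw [mul_sub, mul_add, sub_div, add_div]
  generalize π * κ / N = x
  generalize π * j / N = y at hs ⊢
  field_simp
  linear_combination sin_sq_sub_sin_sq x y

lemma prod_one_sub_t_div_t_sq_of_lt {N M n κ : ℕ} (hκ : n < κ) (hκM : κ ≤ M) (hMN : M < N) :
    ∏ j ∈ Icc (n + 1) M, (1 - (t N κ / t N j) ^ 2) = 0 := by
  refine prod_eq_zero (mem_Icc.2 ⟨hκ, hκM⟩) ?_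
  rw [t_div_t (by omega), Int.cast_natCast, div_self (sin_pi_mul_div_pos (by omega) (by omega)).ne']
  norm_num

lemma prod_one_sub_t_div_t_sq_of_le {N M n κ : ℕ} (hNM : N = 2 * M + 1) (hκn : κ ≤ n)
    (hnM : n ≤ M) :
    ∏ j ∈ Icc (n + 1) M, (1 - (t N κ / t N j) ^ 2) = S N n ^ 2 / (S N (n - κ) * S N (n + κ)) := by
  have hS : ∀ m, m < N → S N m ≠ 0 := fun m hm ↦ (S_pos hm).ne'
  calc _ = ∏ j ∈ Icc (n + 1) M,
        2 * sin (π * ↑(j - κ) / N) * (2 * sin (π * ↑(j + κ) / N)) / (2 * sin (π * j / N)) ^ 2 :=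
        prod_congr rfl fun j hj ↦ by
          simp only [mem_Icc] at hj
          exact one_sub_t_div_t_sq (by omega) (by omega) (by omega)
    _ = S N (M - κ) / S N (n - κ) * (S N (M + κ) / S N (n + κ)) / (S N M / S N n) ^ 2 := by
        rw [prod_div_distrib, prod_mul_distrib, prod_pow, prod_Icc_two_sin_sub_eq_div hκn hnM
          (by omega), prod_Icc_two_sin_add_eq_div hnM (by omega),
          prod_Icc_two_sin_eq_div hnM (by omega)]
    _ = _ := by
        have hM := S_mul_S_of_add_eq (N := N) (a := M) (b := M) (by omega)
        have hMκ := S_mul_S_of_add_eq (N := N) (a := M - κ) (b := M + κ) (by omega)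
        field_simp [hS M (by omega), hS n (by omega), hS (n - κ) (by omega),
          hS (n + κ) (by omega)]
        linear_combination hMκ - hM

theorem prod_one_sub_t_div_t_sq {N M n κ : ℕ} (hNM : N = 2 * M + 1) (hnM : n ≤ M) (hκM : κ ≤ M) :
    ∏ j ∈ Icc (n + 1) M, (1 - (t N κ / t N j) ^ 2) =
      S N n ^ 2 / (N : ℝ) ^ 2 * S N (2 * M - n - κ) * S N (2 * M - n + κ) := by
  rcases lt_or_ge n κ with hnκ | hκn
  · rw [prod_one_sub_t_div_t_sq_of_lt hnκ hκM (by omega),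
      S_eq_zero (m := 2 * M - n + κ) (by omega) (by omega), mul_zero]
  · have h₁ := S_mul_S_of_add_eq (N := N) (a := n + κ) (b := 2 * M - n - κ) (by omega)
    have h₂ := S_mul_S_of_add_eq (N := N) (a := n - κ) (b := 2 * M - n + κ) (by omega)
    have hN : (N : ℝ) ≠ 0 := by norm_cast; omega
    rw [prod_one_sub_t_div_t_sq_of_le hNM hκn hnM]
    field_simp [(S_pos (N := N) (m := n - κ) (by omega)).ne',
      (S_pos (N := N) (m := n + κ) (by omega)).ne']
    linear_combination -S N n ^ 2 * (N * h₂ + S N (n - κ) * S N (2 * M - n + κ) * h₁)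

lemma u_neg (N n : ℕ) (k : ℤ) : u N n (-k) = u N n k := by
  simp only [u, t_neg, neg_div, neg_sq]

lemma SZ_natCast (N m : ℕ) : SZ N m = S N m := by
  rw [SZ, Int.toNat_natCast, S]

theorem stmt_7_general (N : ℕ) (hodd : Odd N) (n : ℕ) (hn : n ≤ N / 2)
    (k : ℤ) (hk : |k| ≤ (N : ℤ) / 2) :
    u N n k = alph N n * S N n ^ 2 / (N : ℝ) ^ 2
        * SZ N ((N : ℤ) - n - 1 - k) * SZ N ((N : ℤ) - n - 1 + k) := by
  obtain ⟨M, hNM⟩ := hodd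
  have hM : N / 2 = M := by omega
  obtain ⟨κ, rfl | rfl⟩ : ∃ κ : ℕ, k = κ ∨ k = -κ := ⟨k.natAbs, k.natAbs_eq⟩
  all_goals
    have hκM : κ ≤ M := by simp only [abs_neg, Nat.abs_cast] at hk; omega
    have hsub : (N : ℤ) - n - 1 - κ = ↑(2 * M - n - κ) := by omega
    have hadd : (N : ℤ) - n - 1 + κ = ↑(2 * M - n + κ) := by omega
  · rw [u, hM, prod_one_sub_t_div_t_sq hNM (hM ▸ hn) hκM, hsub, hadd, SZ_natCast, SZ_natCast]
    ring
  · rw [u_neg, u, hM, prod_one_sub_t_div_t_sq hNM (hM ▸ hn) hκM, sub_neg_eq_add, ← sub_eq_add_neg,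
      hsub, hadd, SZ_natCast, SZ_natCast]
    ring

theorem stmt_7 (N : ℕ) (hN : 3 ≤ N) (hodd : Odd N) (n : ℕ) (hn : n ≤ N / 2)
    (k : ℤ) (hk : |k| ≤ (N : ℤ) / 2) :
    u N n k = alph N n * S N n ^ 2 / (N : ℝ) ^ 2
        * SZ N ((N : ℤ) - n - 1 - k) * SZ N ((N : ℤ) - n - 1 + k) :=
  stmt_7_general N hodd n hn k hk
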